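/- Let (X,d) be a metric space equipped with its Borel σ-algebra, let r_1,…,r_M ∈ X be prototypes with dissimilarity embedding ζ(g) = (d(g,r_1),…,d(g,r_M)) ∈ ℝ^M, and let d' be a metric on ℝ^M for which there is a constant m' > 0 with d'(a,b) ≤ m'·‖a−b‖₂ for all a,b ∈ ℝ^M. Let g_1,…,g_n (with n ≥ 2) be i.i.d. X-valued random elements on a probability space (Ω,P) with common law Q such that E[d(g_1,z)²] < ∞ for every z ∈ X. Let m ∈ X be a Fréchet population mean of Q with V_Q := E[d(g_1,m)²], and let μ̂ : Ω → X be a measurable Fréchet sample mean of g_1,…,g_n. Set ȳ := (1/n)·Σ_{t=1}^n ζ(g_t), e := E[ζ(g_1)], Var_F := E[‖ζ(g_1) − e‖₂²], and v₂ := M·V_Q − Var_F/2. Then for every δ > 0: P( |d'(e,ȳ) − d'(ζ(m),ζ(μ̂))| ≤ m'·√(2·(v₂ + δ)) ) ≥ 1 − v₂/δ. -/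

import Mathlib

/-!
Write `ζ` for the embedding and `ȳ` for the embedded sample mean. The triangle inequality for `d'`
and its domination by `m'‖·‖` bound the deviation by
`m' (‖e - ζ m‖ + ‖ȳ - ζ μ̂‖) ≤ m' √(2 (‖e - ζ m‖² + ‖ȳ - ζ μ̂‖²))`.
Since `‖ζ a - ζ b‖² ≤ M d(a,b)²`, Huygens' decomposition bounds `‖e - ζ m‖²` by `M V_Q - Var_F`,
and, since `μ̂` does at least as well as `m` in the empirical Fréchet function, it
bounds `‖ȳ - ζ μ̂‖²` by `W := M · (1/n) Σ d(g_t, m)² - (empirical variance of the ζ(g_t))`.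
Pairwise independence kills the cross terms in `E‖ȳ - e‖²`, so the empirical variance has mean
`(1 - 1/n) Var_F`, whence `E W ≤ M V_Q - Var_F / 2 = v₂` for `n ≥ 2`. Markov's inequality at
level `Var_F / 2 + δ` concludes.
-/

open MeasureTheory ProbabilityTheory

/-- The dissimilarity embedding `ζ(g) = (d(g,r_1),…,d(g,r_M)) ∈ ℝ^M`. -/
noncomputable def dissEmbed {X : Type*} [MetricSpace X] {M : ℕ} (r : Fin M → X) (g : X) :
    EuclideanSpace ℝ (Fin M) :=
  (WithLp.equiv 2 (Fin M → ℝ)).symm fun i => dist g (r i)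

open Finset

noncomputable def sampleMean {F : Type*} [AddCommMonoid F] [Module ℝ F] {n : ℕ}
    (v : Fin n → F) : F :=
  (n : ℝ)⁻¹ • ∑ t, v t

section Huygens

variable {E : Type*} [NormedAddCommGroup E] [InnerProductSpace ℝ E]

noncomputable def sampleVariance {n : ℕ} (v : Fin n → E) : ℝ :=
  sampleMean fun t => ‖v t - sampleMean v‖ ^ 2

theorem norm_sub_sq_eq_add_inner (x y c : E) :
    ‖x - c‖ ^ 2 = ‖x - y‖ ^ 2 + 2 * inner ℝ (y - c) (x - y) + ‖y - c‖ ^ 2 := by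
  rw [← sub_add_sub_cancel x y c, norm_add_sq_real, real_inner_comm]

theorem sampleVariance_eq {n : ℕ} (hn : n ≠ 0) (v : Fin n → E) (c : E) :
    sampleVariance v = sampleMean (fun t => ‖v t - c‖ ^ 2) - ‖sampleMean v - c‖ ^ 2 := by
  have hcentered : ∑ t, (v t - sampleMean v) = 0 := by
    rw [sum_sub_distrib, sum_const, card_univ, Fintype.card_fin, ← Nat.cast_smul_eq_nsmul ℝ,
      sampleMean, smul_inv_smul₀ (Nat.cast_ne_zero.2 hn), sub_self]
  have hsplit : (fun t => ‖v t - c‖ ^ 2) = fun t => ‖v t - sampleMean v‖ ^ 2 +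
      2 * inner ℝ (sampleMean v - c) (v t - sampleMean v) + ‖sampleMean v - c‖ ^ 2 :=
    funext fun t => norm_sub_sq_eq_add_inner _ _ c
  rw [hsplit, sampleVariance]
  generalize sampleMean v = w at hcentered ⊢
  simp only [sampleMean, smul_eq_mul, sum_add_distrib, ← mul_sum, ← inner_sum, hcentered,
    inner_zero_right, sum_const, card_univ, Fintype.card_fin, nsmul_eq_mul]
  field_simp
  ring

theorem integral_norm_sub_sq [CompleteSpace E] {α : Type*} [MeasurableSpace α] {μ : Measure α}
    [IsProbabilityMeasure μ] {f : α → E} (hf : MemLp f 2 μ) (c : E) :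
    ∫ x, ‖f x - c‖ ^ 2 ∂μ = ∫ x, ‖f x - ∫ y, f y ∂μ‖ ^ 2 ∂μ + ‖∫ y, f y ∂μ - c‖ ^ 2 := by
  set e := ∫ y, f y ∂μ
  have hf1 : Integrable f μ := hf.integrable one_le_two
  have hfe : Integrable (fun x => f x - e) μ := hf1.sub (integrable_const e)
  have hcentered : ∫ x, (f x - e) ∂μ = 0 := by
    rw [integral_sub hf1 (integrable_const e), integral_const, probReal_univ, one_smul, sub_self]
  have hsq : Integrable (fun x => ‖f x - e‖ ^ 2) μ :=
    (hf.sub (memLp_const e)).integrable_norm_pow two_ne_zero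
  have hinner : Integrable (fun x => 2 * inner ℝ (e - c) (f x - e)) μ :=
    (hfe.const_inner (e - c)).const_mul 2
  have hsplit : (fun x => ‖f x - c‖ ^ 2) = fun x => ‖f x - e‖ ^ 2 +
      2 * inner ℝ (e - c) (f x - e) + ‖e - c‖ ^ 2 :=
    funext fun x => norm_sub_sq_eq_add_inner _ _ c
  have hsum : Integrable (fun x => ‖f x - e‖ ^ 2 + 2 * inner ℝ (e - c) (f x - e)) μ :=
    hsq.add hinner
  rw [hsplit, integral_add hsum (integrable_const _), integral_add hsq hinner,
    integral_const_mul, integral_inner hfe, hcentered, inner_zero_right,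
    integral_const, probReal_univ, one_smul]
  ring

end Huygens

section Independence

variable {Ω 𝓧 : Type*} [MeasurableSpace Ω] [MeasurableSpace 𝓧] {P : Measure Ω} {Q : Measure 𝓧}

theorem ProbabilityTheory.HasLaw.memLp_comp {F : Type*} [NormedAddCommGroup F] {X : Ω → 𝓧}
    (hX : HasLaw X Q P) {f : 𝓧 → F} {p : ENNReal} (hf : MemLp f p Q) :
    MemLp (fun ω => f (X ω)) p P :=
  (hX.map_eq ▸ hf).comp_of_map hX.aemeasurable

theorem ProbabilityTheory.HasLaw.integrable_comp {F : Type*} [NormedAddCommGroup F] {X : Ω → 𝓧}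
    (hX : HasLaw X Q P) {f : 𝓧 → F} (hf : Integrable f Q) : Integrable (fun ω => f (X ω)) P :=
  (hX.map_eq ▸ hf).comp_aemeasurable hX.aemeasurable

variable {E : Type*} [NormedAddCommGroup E] [InnerProductSpace ℝ E]

theorem MeasureTheory.MemLp.integrable_inner {f g : Ω → E} (hf : MemLp f 2 P)
    (hg : MemLp g 2 P) : Integrable (fun ω => inner ℝ (f ω) (g ω)) P := by
  refine ((hf.integrable_norm_pow two_ne_zero).add (hg.integrable_norm_pow two_ne_zero)).mono'
    (hf.1.inner hg.1) (ae_of_all _ fun ω => ?_)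
  calc ‖inner ℝ (f ω) (g ω)‖ ≤ ‖f ω‖ * ‖g ω‖ := norm_inner_le_norm _ _
    _ ≤ ‖f ω‖ ^ 2 + ‖g ω‖ ^ 2 := by
      linarith [two_mul_le_add_sq ‖f ω‖ ‖g ω‖, mul_nonneg (norm_nonneg (f ω)) (norm_nonneg (g ω))]

variable [CompleteSpace E] [MeasurableSpace E] [BorelSpace E]

theorem integral_norm_sum_sq_of_pairwise_indepFun {ι : Type*} [Fintype ι]
    [IsFiniteMeasure P] {Y : ι → Ω → E} (hY : ∀ i, MemLp (Y i) 2 P)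
    (hcentered : ∀ i, ∫ ω, Y i ω ∂P = 0) (hindep : Pairwise fun i j => Y i ⟂ᵢ[P] Y j) :
    ∫ ω, ‖∑ i, Y i ω‖ ^ 2 ∂P = ∑ i, ∫ ω, ‖Y i ω‖ ^ 2 ∂P := by
  classical
  have hcross : ∀ i j, ∫ ω, inner ℝ (Y i ω) (Y j ω) ∂P =
      if i = j then ∫ ω, ‖Y i ω‖ ^ 2 ∂P else 0 := by
    intro i j
    split_ifs with hij
    · simp [hij]
    · have := (hindep hij).integral_bilin ((hY i).integrable one_le_two)
        ((hY j).integrable one_le_two) (innerSL ℝ)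
      rw [hcentered, map_zero, zero_apply] at this
      exact this
  calc ∫ ω, ‖∑ i, Y i ω‖ ^ 2 ∂P = ∫ ω, ∑ i, ∑ j, inner ℝ (Y i ω) (Y j ω) ∂P := by
        simp_rw [← real_inner_self_eq_norm_sq, sum_inner, inner_sum]
    _ = ∑ i, ∑ j, ∫ ω, inner ℝ (Y i ω) (Y j ω) ∂P := by
        rw [integral_finsetSum _ fun i _ => integrable_finsetSum _ fun j _ =>
          (hY i).integrable_inner (hY j)]
        exact sum_congr rfl fun i _ =>
          integral_finsetSum _ fun j _ => (hY i).integrable_inner (hY j)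
    _ = ∑ i, ∫ ω, ‖Y i ω‖ ^ 2 ∂P := by simp [hcross]

end Independence

section SampleStatistics

variable {Ω 𝓧 : Type*} [MeasurableSpace Ω] [MeasurableSpace 𝓧] {P : Measure Ω} {Q : Measure 𝓧}
  {n : ℕ} {g : Fin n → Ω → 𝓧}

theorem integrable_sampleMean_comp {F : Type*} [NormedAddCommGroup F] [NormedSpace ℝ F]
    (hg : ∀ t, HasLaw (g t) Q P) {f : 𝓧 → F} (hf : Integrable f Q) :
    Integrable (fun ω => sampleMean fun t => f (g t ω)) P :=
  Integrable.smul _ (integrable_finsetSum _ fun t _ => (hg t).integrable_comp hf)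

theorem integral_sampleMean_comp {F : Type*} [NormedAddCommGroup F] [NormedSpace ℝ F]
    [CompleteSpace F] (hn : n ≠ 0) (hg : ∀ t, HasLaw (g t) Q P) {f : 𝓧 → F}
    (hf : Integrable f Q) :
    ∫ ω, (sampleMean fun t => f (g t ω)) ∂P = ∫ x, f x ∂Q := by
  have hcomp : ∀ t, ∫ ω, f (g t ω) ∂P = ∫ x, f x ∂Q := fun t => (hg t).integral_comp hf.1
  simp only [sampleMean]
  rw [integral_smul, integral_finsetSum _ fun t _ => (hg t).integrable_comp hf]
  simp only [hcomp, sum_const, card_univ, Fintype.card_fin, ← Nat.cast_smul_eq_nsmul ℝ]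
  exact inv_smul_smul₀ (Nat.cast_ne_zero.2 hn) _

theorem integrable_norm_sampleMean_comp_sub_sq [IsFiniteMeasure P] {F : Type*}
    [NormedAddCommGroup F] [NormedSpace ℝ F] (hg : ∀ t, HasLaw (g t) Q P) {f : 𝓧 → F}
    (hf : MemLp f 2 Q) (c : F) :
    Integrable (fun ω => ‖sampleMean (fun t => f (g t ω)) - c‖ ^ 2) P := by
  have hmean : MemLp (fun ω => sampleMean fun t => f (g t ω)) 2 P := by
    have hsum := memLp_finsetSum (f := fun t ω => f (g t ω)) univ fun t _ => (hg t).memLp_comp hf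
    exact hsum.const_smul ((n : ℝ)⁻¹)
  exact (hmean.sub (memLp_const c)).integrable_norm_pow two_ne_zero

variable [IsProbabilityMeasure P] [IsFiniteMeasure Q] {E : Type*} [NormedAddCommGroup E]
  [InnerProductSpace ℝ E] {f : 𝓧 → E}

theorem integrable_sampleVariance_comp (hn : n ≠ 0) (hg : ∀ t, HasLaw (g t) Q P)
    (hf : MemLp f 2 Q) : Integrable (fun ω => sampleVariance fun t => f (g t ω)) P := by
  set e := ∫ x, f x ∂Q
  simp only [sampleVariance_eq hn _ e]
  exact (integrable_sampleMean_comp hg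
    ((hf.sub (memLp_const e)).integrable_norm_pow two_ne_zero)).sub
    (integrable_norm_sampleMean_comp_sub_sq hg hf e)

variable [CompleteSpace E] [MeasurableSpace E] [BorelSpace E]

theorem integral_norm_sampleMean_comp_sub_sq (hn : n ≠ 0) (hg : ∀ t, HasLaw (g t) Q P)
    (hindep : Pairwise fun s t => g s ⟂ᵢ[P] g t) (hfm : Measurable f) (hf : MemLp f 2 Q) :
    ∫ ω, ‖sampleMean (fun t => f (g t ω)) - ∫ x, f x ∂Q‖ ^ 2 ∂P =
      (∫ x, ‖f x - ∫ y, f y ∂Q‖ ^ 2 ∂Q) / n := by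
  have hn' : (n : ℝ) ≠ 0 := Nat.cast_ne_zero.2 hn
  set e := ∫ x, f x ∂Q
  set Y : Fin n → Ω → E := fun t ω => f (g t ω) - e
  have hY : ∀ t, MemLp (Y t) 2 P := fun t => (hg t).memLp_comp (hf.sub (memLp_const e))
  have hcentered : ∀ t, ∫ ω, Y t ω ∂P = 0 := fun t => by
    rw [integral_sub ((hg t).integrable_comp (hf.integrable one_le_two)) (integrable_const e),
      show ∫ ω, f (g t ω) ∂P = e from (hg t).integral_comp hf.1, integral_const, probReal_univ,
      one_smul, sub_self]
  have hindepY : Pairwise fun s t => Y s ⟂ᵢ[P] Y t := fun s t hst =>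
    (hindep hst).comp (hfm.sub_const e) (hfm.sub_const e)
  have hnorm : ∀ t, ∫ ω, ‖Y t ω‖ ^ 2 ∂P = ∫ x, ‖f x - e‖ ^ 2 ∂Q := fun t =>
    (hg t).integral_comp ((hf.sub (memLp_const e)).1.norm.pow 2)
  have hmean : ∀ ω, sampleMean (fun t => f (g t ω)) - e = (n : ℝ)⁻¹ • ∑ t, Y t ω := fun ω => by
    simp only [Y, sampleMean, sum_sub_distrib, sum_const, card_univ, Fintype.card_fin, smul_sub,
      ← Nat.cast_smul_eq_nsmul ℝ, inv_smul_smul₀ hn']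
  simp only [hmean, norm_smul, mul_pow, norm_inv, RCLike.norm_natCast]
  rw [integral_const_mul, integral_norm_sum_sq_of_pairwise_indepFun hY hcentered hindepY]
  simp only [hnorm, sum_const, card_univ, Fintype.card_fin, nsmul_eq_mul]
  field_simp

theorem integral_sampleVariance_comp (hn : n ≠ 0) (hg : ∀ t, HasLaw (g t) Q P)
    (hindep : Pairwise fun s t => g s ⟂ᵢ[P] g t) (hfm : Measurable f) (hf : MemLp f 2 Q) :
    ∫ ω, sampleVariance (fun t => f (g t ω)) ∂P =
      (1 - (n : ℝ)⁻¹) * ∫ x, ‖f x - ∫ y, f y ∂Q‖ ^ 2 ∂Q := by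
  set e := ∫ x, f x ∂Q
  have hsq : Integrable (fun x => ‖f x - e‖ ^ 2) Q :=
    (hf.sub (memLp_const e)).integrable_norm_pow two_ne_zero
  simp only [sampleVariance_eq hn _ e]
  rw [integral_sub (integrable_sampleMean_comp hg hsq)
    (integrable_norm_sampleMean_comp_sub_sq hg hf e), integral_sampleMean_comp hn hg hsq,
    integral_norm_sampleMean_comp_sub_sq hn hg hindep hfm hf]
  ring

end SampleStatistics

section FeatureMap

variable {X E : Type*} [MetricSpace X] [NormedAddCommGroup E] [InnerProductSpace ℝ E]
  {f : X → E} {K : ℝ}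

theorem norm_sampleMean_comp_sub_sq_le (hf : ∀ a b, ‖f a - f b‖ ^ 2 ≤ K * dist a b ^ 2)
    (hK : 0 ≤ K) {n : ℕ} (hn : n ≠ 0) (x : Fin n → X) {μ z : X}
    (hμ : ∑ t, dist (x t) μ ^ 2 ≤ ∑ t, dist (x t) z ^ 2) :
    ‖sampleMean (fun t => f (x t)) - f μ‖ ^ 2 ≤
      K * sampleMean (fun t => dist (x t) z ^ 2) - sampleVariance (fun t => f (x t)) := by
  have hhuygens := sampleVariance_eq hn (fun t => f (x t)) (f μ)
  have hlip : sampleMean (fun t => ‖f (x t) - f μ‖ ^ 2) ≤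
      K * sampleMean (fun t => dist (x t) z ^ 2) := by
    simp only [sampleMean, smul_eq_mul, mul_left_comm K]
    gcongr
    calc ∑ t, ‖f (x t) - f μ‖ ^ 2 ≤ ∑ t, K * dist (x t) μ ^ 2 := sum_le_sum fun t _ => hf _ _
      _ ≤ K * ∑ t, dist (x t) z ^ 2 := by rw [← mul_sum]; gcongr
  linarith

theorem norm_integral_sub_sq_le [MeasurableSpace X] [CompleteSpace E] {Q : Measure X}
    [IsProbabilityMeasure Q] (hf : ∀ a b, ‖f a - f b‖ ^ 2 ≤ K * dist a b ^ 2)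
    (hf2 : MemLp f 2 Q) {z : X} (hz : Integrable (fun x => dist x z ^ 2) Q) :
    ‖∫ x, f x ∂Q - f z‖ ^ 2 ≤ K * ∫ x, dist x z ^ 2 ∂Q - ∫ x, ‖f x - ∫ y, f y ∂Q‖ ^ 2 ∂Q := by
  have hhuygens := integral_norm_sub_sq hf2 (f z)
  have hlip : ∫ x, ‖f x - f z‖ ^ 2 ∂Q ≤ K * ∫ x, dist x z ^ 2 ∂Q := by
    rw [← integral_const_mul]
    exact integral_mono ((hf2.sub (memLp_const _)).integrable_norm_pow two_ne_zero)
      (hz.const_mul K) fun x => hf x z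
  linarith

end FeatureMap

section DissimilarityEmbedding

variable {X : Type*} [MetricSpace X] {M : ℕ} (r : Fin M → X)

theorem norm_dissEmbed_sub_sq_le (a b : X) :
    ‖dissEmbed r a - dissEmbed r b‖ ^ 2 ≤ M * dist a b ^ 2 := by
  rw [EuclideanSpace.norm_sq_eq]
  calc ∑ i, ‖(dissEmbed r a - dissEmbed r b) i‖ ^ 2 ≤ ∑ _i : Fin M, dist a b ^ 2 := by
        refine sum_le_sum fun i _ => ?_
        rw [Real.norm_eq_abs, sq_abs]
        exact sq_le_sq' (abs_le.1 (abs_dist_sub_le a b (r i))).1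
          (abs_le.1 (abs_dist_sub_le a b (r i))).2
    _ = M * dist a b ^ 2 := by simp

theorem continuous_dissEmbed : Continuous (dissEmbed r) :=
  (PiLp.continuous_toLp 2 _).comp (continuous_pi fun _ => continuous_id.dist continuous_const)

theorem memLp_dissEmbed [MeasurableSpace X] [BorelSpace X] {Q : Measure X}
    (hint : ∀ i, Integrable (fun x => dist x (r i) ^ 2) Q) : MemLp (dissEmbed r) 2 Q := by
  refine (memLp_two_iff_integrable_sq_norm (continuous_dissEmbed r).aestronglyMeasurable).2 ?_
  simp only [EuclideanSpace.norm_sq_eq, Real.norm_eq_abs, sq_abs]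
  exact integrable_finsetSum _ fun i _ => hint i

end DissimilarityEmbedding

theorem abs_sub_le_add_of_triangle {α : Type*} (d : α → α → ℝ) (hsymm : ∀ a b, d a b = d b a)
    (htri : ∀ a b c, d a c ≤ d a b + d b c) (a b a' b' : α) :
    |d a b - d a' b'| ≤ d a a' + d b b' := by
  rw [abs_sub_le_iff]
  constructor
  · linarith [htri a a' b, htri a' b' b, hsymm b b']
  · linarith [htri a' a b', htri a b b', hsymm a a']

theorem one_sub_div_le_measureReal_lt_add {Ω : Type*} [MeasurableSpace Ω] {P : Measure Ω}
    [IsProbabilityMeasure P] {W : Ω → ℝ} (hW0 : ∀ ω, 0 ≤ W ω) (hW : Integrable W P)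
    {v c δ : ℝ} (hv : ∫ ω, W ω ∂P ≤ v) (hc : 0 ≤ c) (hδ : 0 < δ) :
    1 - v / δ ≤ P.real {ω | W ω < c + δ} := by
  have hmarkov := mul_meas_ge_le_integral_of_nonneg (ae_of_all _ hW0) hW (c + δ)
  have htail : P.real {ω | c + δ ≤ W ω} ≤ v / δ := by
    rw [le_div_iff₀ hδ]
    nlinarith [measureReal_nonneg (μ := P) (s := {ω | c + δ ≤ W ω})]
  have hcompl : {ω | W ω < c + δ} = {ω | c + δ ≤ W ω}ᶜ := by
    ext ω
    simp [not_le]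
  rw [hcompl, probReal_compl_eq_one_sub₀ (nullMeasurableSet_le aemeasurable_const hW.aemeasurable)]
  linarith

theorem abs_sub_le_mul_sqrt_of_le_mul_norm {E : Type*} [SeminormedAddCommGroup E]
    (d : E → E → ℝ) (hsymm : ∀ a b, d a b = d b a) (htri : ∀ a b c, d a c ≤ d a b + d b c)
    {C : ℝ} (hC : 0 ≤ C) (hdom : ∀ a b, d a b ≤ C * ‖a - b‖) {a b a' b' : E} {s : ℝ}
    (hs : ‖a - a'‖ ^ 2 + ‖b - b'‖ ^ 2 ≤ s) :
    |d a b - d a' b'| ≤ C * √(2 * s) := by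
  have hsum : ‖a - a'‖ + ‖b - b'‖ ≤ √(2 * s) := by
    rw [Real.le_sqrt (by positivity) (by nlinarith)]
    nlinarith [add_sq_le (a := ‖a - a'‖) (b := ‖b - b'‖)]
  calc |d a b - d a' b'| ≤ d a a' + d b b' := abs_sub_le_add_of_triangle d hsymm htri a b a' b'
    _ ≤ C * ‖a - a'‖ + C * ‖b - b'‖ := add_le_add (hdom a a') (hdom b b')
    _ = C * (‖a - a'‖ + ‖b - b'‖) := by ring
    _ ≤ C * √(2 * s) := by gcongr

theorem embedded_statistic_concentration_general
    {X : Type*} [MetricSpace X] [MeasurableSpace X] [BorelSpace X]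
    {Ω : Type*} [MeasurableSpace Ω] (P : Measure Ω) [IsProbabilityMeasure P]
    {M : ℕ} (r : Fin M → X)
    -- d' is a metric on ℝ^M dominated by a multiple of the Euclidean distance
    (d' : EuclideanSpace ℝ (Fin M) → EuclideanSpace ℝ (Fin M) → ℝ)
    (hd'_symm : ∀ a b, d' a b = d' b a)
    (hd'_tri : ∀ a b c, d' a c ≤ d' a b + d' b c)
    (m' : ℝ) (hm' : 0 < m')
    (hd'_dom : ∀ a b, d' a b ≤ m' * ‖a - b‖)
    -- i.i.d. sample g_1,…,g_n with common law Q
    {n : ℕ} (hn : 2 ≤ n) (g : Fin n → Ω → X) (hgm : ∀ t, Measurable (g t))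
    (Q : Measure X) [IsProbabilityMeasure Q]
    (hlaw : ∀ t, Measure.map (g t) P = Q)
    (hindep : iIndepFun g P)
    (hint : ∀ z : X, Integrable (fun x => dist x z ^ 2) Q)
    -- Fréchet population mean m with variation V_Q
    (m : X)
    (VQ : ℝ) (hVQ : VQ = ∫ x, dist x m ^ 2 ∂Q)
    -- measurable Fréchet sample mean
    (μhat : Ω → X)
    (hsample : ∀ ω, ∀ z : X,
      ∑ t, dist (g t ω) (μhat ω) ^ 2 ≤ ∑ t, dist (g t ω) z ^ 2)
    -- embedded sample mean, expectation, variance and v₂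
    (ybar : Ω → EuclideanSpace ℝ (Fin M))
    (hybar : ∀ ω, ybar ω = (n : ℝ)⁻¹ • ∑ t, dissEmbed r (g t ω))
    (e : EuclideanSpace ℝ (Fin M)) (he : e = ∫ x, dissEmbed r x ∂Q)
    (VarF : ℝ) (hVarF : VarF = ∫ x, ‖dissEmbed r x - e‖ ^ 2 ∂Q)
    (v2 : ℝ) (hv2 : v2 = (M : ℝ) * VQ - VarF / 2) :
    ∀ δ > (0 : ℝ),
      (1 : ℝ) - v2 / δ ≤
        (P {ω | |d' e (ybar ω) - d' (dissEmbed r m) (dissEmbed r (μhat ω))| ≤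
            m' * Real.sqrt (2 * (v2 + δ))}).toReal := by
  intro δ hδ
  subst he
  have hn0 : n ≠ 0 := by omega
  have hg : ∀ t, HasLaw (g t) Q P := fun t => ⟨(hgm t).aemeasurable, hlaw t⟩
  have hζ : MemLp (dissEmbed r) 2 Q := memLp_dissEmbed r fun i => hint (r i)
  set W : Ω → ℝ := fun ω => M * sampleMean (fun t => dist (g t ω) m ^ 2) -
    sampleVariance fun t => dissEmbed r (g t ω)
  have hsample_dev : ∀ ω, ‖ybar ω - dissEmbed r (μhat ω)‖ ^ 2 ≤ W ω := fun ω => by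
    rw [hybar ω]
    exact norm_sampleMean_comp_sub_sq_le (norm_dissEmbed_sub_sq_le r) M.cast_nonneg hn0
      (fun t => g t ω) (hsample ω m)
  have hpop_dev : ‖(∫ x, dissEmbed r x ∂Q) - dissEmbed r m‖ ^ 2 ≤ M * VQ - VarF := by
    rw [hVQ, hVarF]
    exact norm_integral_sub_sq_le (norm_dissEmbed_sub_sq_le r) hζ (hint m)
  have hVarF0 : 0 ≤ VarF := hVarF ▸ integral_nonneg fun x => sq_nonneg _
  have hfrechet := (integrable_sampleMean_comp hg (hint m)).const_mul (M : ℝ)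
  have hvar := integrable_sampleVariance_comp hn0 hg hζ
  have hEW : ∫ ω, W ω ∂P ≤ v2 := by
    rw [integral_sub hfrechet hvar, integral_const_mul, integral_sampleMean_comp hn0 hg (hint m),
      integral_sampleVariance_comp hn0 hg (fun s t hst => hindep.indepFun hst)
        (continuous_dissEmbed r).measurable hζ, ← hVQ, ← hVarF, hv2]
    have : (n : ℝ)⁻¹ ≤ 2⁻¹ := inv_anti₀ two_pos (by exact_mod_cast hn)
    nlinarith
  have hgood := one_sub_div_le_measureReal_lt_add (fun ω => (sq_nonneg _).trans (hsample_dev ω))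
    (hfrechet.sub hvar) hEW (by positivity : 0 ≤ VarF / 2) hδ
  refine hgood.trans (measureReal_mono fun ω (hω : W ω < VarF / 2 + δ) => ?_)
  exact abs_sub_le_mul_sqrt_of_le_mul_norm d' hd'_symm hd'_tri hm'.le hd'_dom
    (by linarith [hsample_dev ω])

/-- Part 1 of the proof of the paper's Proposition 1:
`P(|d'(e,ȳ) − d'(ζ(m),ζ(μ̂))| ≤ m'·√(2·(v₂ + δ))) ≥ 1 − v₂/δ`. -/
theorem embedded_statistic_concentration
    {X : Type*} [MetricSpace X] [MeasurableSpace X] [BorelSpace X]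
    {Ω : Type*} [MeasurableSpace Ω] (P : Measure Ω) [IsProbabilityMeasure P]
    {M : ℕ} (r : Fin M → X)
    -- d' is a metric on ℝ^M dominated by a multiple of the Euclidean distance
    (d' : EuclideanSpace ℝ (Fin M) → EuclideanSpace ℝ (Fin M) → ℝ)
    (hd'_self : ∀ a, d' a a = 0)
    (hd'_eq : ∀ a b, d' a b = 0 → a = b)
    (hd'_symm : ∀ a b, d' a b = d' b a)
    (hd'_tri : ∀ a b c, d' a c ≤ d' a b + d' b c)
    (m' : ℝ) (hm' : 0 < m')
    (hd'_dom : ∀ a b, d' a b ≤ m' * ‖a - b‖)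
    -- i.i.d. sample g_1,…,g_n with common law Q
    {n : ℕ} (hn : 2 ≤ n) (g : Fin n → Ω → X) (hgm : ∀ t, Measurable (g t))
    (Q : Measure X) [IsProbabilityMeasure Q]
    (hlaw : ∀ t, Measure.map (g t) P = Q)
    (hindep : iIndepFun g P)
    (hint : ∀ z : X, Integrable (fun x => dist x z ^ 2) Q)
    -- Fréchet population mean m with variation V_Q
    (m : X) (hmean : ∀ z : X, ∫ x, dist x m ^ 2 ∂Q ≤ ∫ x, dist x z ^ 2 ∂Q)
    (VQ : ℝ) (hVQ : VQ = ∫ x, dist x m ^ 2 ∂Q)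
    -- measurable Fréchet sample mean
    (μhat : Ω → X) (hμhat : Measurable μhat)
    (hsample : ∀ ω, ∀ z : X,
      ∑ t, dist (g t ω) (μhat ω) ^ 2 ≤ ∑ t, dist (g t ω) z ^ 2)
    -- embedded sample mean, expectation, variance and v₂
    (ybar : Ω → EuclideanSpace ℝ (Fin M))
    (hybar : ∀ ω, ybar ω = (n : ℝ)⁻¹ • ∑ t, dissEmbed r (g t ω))
    (e : EuclideanSpace ℝ (Fin M)) (he : e = ∫ x, dissEmbed r x ∂Q)
    (VarF : ℝ) (hVarF : VarF = ∫ x, ‖dissEmbed r x - e‖ ^ 2 ∂Q)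
    (v2 : ℝ) (hv2 : v2 = (M : ℝ) * VQ - VarF / 2) :
    ∀ δ > (0 : ℝ),
      (1 : ℝ) - v2 / δ ≤
        (P {ω | |d' e (ybar ω) - d' (dissEmbed r m) (dissEmbed r (μhat ω))| ≤
            m' * Real.sqrt (2 * (v2 + δ))}).toReal :=
  embedded_statistic_concentration_general P r d' hd'_symm hd'_tri m' hm' hd'_dom hn g hgm Q hlaw
    hindep hint m VQ hVQ μhat hsample ybar hybar e he VarF hVarF v2 hv2
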